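/- Let s ≥ 2 and let H be a simple graph with H → (s, s)^v. Then the lexicographic product C_{4s−1}[H] satisfies C_{4s−1}[H] → (2s, 2s)^v. -/

import Mathlib

/-- `G → (a₁,…,a_r)ᵛ`: for every coloring of the vertices of `G` with `r` colors,
there is a color `i` and a clique of `G` on `a i` vertices all of whose vertices
receive color `i`. -/
def VArrows {V : Type*} {r : ℕ} (G : SimpleGraph V) (a : Fin r → ℕ) : Prop :=
  ∀ c : V → Fin r, ∃ i : Fin r, ∃ t : Finset V,
    G.IsNClique (a i) t ∧ ∀ v ∈ t, c v = i

/-- The lexicographic product `G[H]` of two simple graphs: `(u, v)` is adjacent to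
`(u', v')` iff `u` is adjacent to `u'` in `G`, or `u = u'` and `v` is adjacent to
`v'` in `H`. -/
def SimpleGraph.lexProd {V W : Type*} (G : SimpleGraph V) (H : SimpleGraph W) :
    SimpleGraph (V × W) where
  Adj p q := G.Adj p.1 q.1 ∨ (p.1 = q.1 ∧ H.Adj p.2 q.2)
  symm := by
    constructor
    rintro p q (h | ⟨h1, h2⟩)
    · exact Or.inl h.symm
    · exact Or.inr ⟨h1.symm, h2.symm⟩
  loopless := by
    constructor
    rintro p (h | ⟨-, h⟩)
    · exact G.loopless.irrefl _ h
    · exact H.loopless.irrefl _ h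

/-!
Vertex-arrowing is multiplicative under the lexicographic product. Given a colouring of `G[H]`,
colour each `u ∈ V(G)` by the colour of a monochromatic clique `t u` in the copy of `H` over `u`;
a clique `K` of `G` that is monochromatic for this colouring lifts to the monochromatic clique
`⋃_{u ∈ K} {u} × t u` of `G[H]`, of size `|K| · |t u|`. An odd cycle is not properly
2-colourable, so `C_{4s-1} → (2, 2)ᵛ`, and hence `C_{4s-1}[H] → (2s, 2s)ᵛ`.
-/

namespace SimpleGraph

variable {V W : Type*} {G : SimpleGraph V} {H : SimpleGraph W}

lemma exists_adj_eq_of_not_colorable {α : Type*} [Fintype α]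
    (hG : ¬G.Colorable (Fintype.card α)) (f : V → α) : ∃ u v, G.Adj u v ∧ f u = f v := by
  by_contra! hf
  exact hG (Coloring.colorable ⟨f, fun huv => hf _ _ huv⟩)

lemma not_colorable_two_cycleGraph_of_odd {n : ℕ} (h3 : 3 ≤ n) (hn : Odd n) :
    ¬(cycleGraph n).Colorable 2 := by
  intro h
  have := h.chromaticNumber_le
  rw [chromaticNumber_cycleGraph_of_odd n (by omega) hn] at this
  norm_num at this

lemma isClique_lexProd {K : Set V} {t : V → Set W} (hK : G.IsClique K)
    (ht : ∀ u ∈ K, H.IsClique (t u)) :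
    (G.lexProd H).IsClique {p | p.1 ∈ K ∧ p.2 ∈ t p.1} := by
  rintro ⟨u, w⟩ ⟨hu, hw⟩ ⟨u', w'⟩ ⟨hu', hw'⟩ hne
  by_cases huu' : u = u'
  · subst huu'
    exact Or.inr ⟨rfl, ht u hu hw hw' fun hww' => hne (Prod.ext rfl hww')⟩
  · exact Or.inl (hK hu hu' huu')

lemma isNClique_lexProd {K : Finset V} {t : V → Finset W} {m n : ℕ} (hK : G.IsNClique m K)
    (ht : ∀ u ∈ K, H.IsNClique n (t u)) :
    (G.lexProd H).IsNClique (m * n) ((K.sigma t).map (Equiv.sigmaEquivProd V W).toEmbedding) := by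
  refine ⟨?_, ?_⟩
  · convert isClique_lexProd (t := fun u => (t u : Set W)) hK.isClique
      fun u hu => (ht u hu).isClique
    ext ⟨u, w⟩
    rw [Finset.mem_coe, Finset.mem_map_equiv]
    simp
  · rw [Finset.card_map, Finset.card_sigma, Finset.sum_congr rfl fun u hu => (ht u hu).card_eq,
      Finset.sum_const, hK.card_eq, smul_eq_mul]

end SimpleGraph

lemma VArrows.two_of_not_colorable {V : Type*} {G : SimpleGraph V} {r : ℕ}
    (hG : ¬G.Colorable r) : VArrows G fun _ : Fin r => 2 := by
  classical
  intro c
  obtain ⟨u, v, huv, hc⟩ := SimpleGraph.exists_adj_eq_of_not_colorable (by simpa using hG) c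
  refine ⟨c u, {u, v}, ?_, ?_⟩
  · exact ⟨by simpa using SimpleGraph.isClique_pair.mpr fun _ => huv, Finset.card_pair huv.ne⟩
  · simp [hc]

lemma VArrows.lexProd {V W : Type*} {G : SimpleGraph V} {H : SimpleGraph W} {r : ℕ}
    {p a : Fin r → ℕ} (hG : VArrows G p) (hH : VArrows H a) : VArrows (G.lexProd H) (p * a) := by
  intro c
  choose i t ht hc using fun u => hH fun w => c (u, w)
  obtain ⟨j, K, hK, hi⟩ := hG i
  refine ⟨j, _, SimpleGraph.isNClique_lexProd hK fun u hu => hi u hu ▸ ht u, ?_⟩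
  rintro ⟨u, w⟩ huw
  rw [Finset.mem_map_equiv] at huw
  obtain ⟨hu, hw⟩ := Finset.mem_sigma.mp huw
  exact hi u hu ▸ hc u w hw

/-- If `s ≥ 2` and `H → (s, s)ᵛ`, then `C_{4s-1}[H] → (2s, 2s)ᵛ`. -/
theorem stmt_9 {W : Type*} (s : ℕ) (hs : 2 ≤ s) (H : SimpleGraph W)
    (hH : VArrows H ![s, s]) :
    VArrows ((SimpleGraph.cycleGraph (4 * s - 1)).lexProd H) ![2 * s, 2 * s] := by
  have hodd : Odd (4 * s - 1) := ⟨2 * s - 1, by omega⟩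
  have hC := VArrows.two_of_not_colorable
    (SimpleGraph.not_colorable_two_cycleGraph_of_odd (by omega) hodd)
  convert hC.lexProd hH using 1
  funext i
  fin_cases i <;> rfl
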